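/- arXiv:1308.2992 — 2 statements merged into one kernel-verified Lean document; each statement's English description precedes it below -/
import Mathlib

section
/- For all $k,\ell\in\{1,\dots,m\}$ one has $\Lambda_\mathbf{i}\big(\varphi'_\mathbf{i}(\partial_\mathbf{i}\varepsilon_k),\ \varphi'_\mathbf{i}(\partial_\mathbf{i}\varepsilon_\ell)\big)=\operatorname{sgn}(\ell-k)\,(w_k\alpha_{i_k},\ w_\ell\alpha_{i_\ell})$. -/
open Finset

/-- The weight lattice `𝒫`: the free abelian group with basis `{αᵢ, ωᵢ : i ∈ I}`,
represented by pairs of coefficient vectors (first component: coefficients of the `αᵢ`,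
second component: coefficients of the `ωᵢ`). -/
abbrev PLat (n : ℕ) := (Fin n → ℤ) × (Fin n → ℤ)

/-- The coroot lattice `𝒬^∨`: the free abelian group with basis `{αᵢ^∨ : i ∈ I}`,
represented by coefficient vectors. -/
abbrev QvLat (n : ℕ) := Fin n → ℤ

variable {n : ℕ}

/-- The basis element `α_j^∨` of `𝒬^∨`. -/
def coroot (j : Fin n) : QvLat n := fun k => if k = j then 1 else 0

/-- The basis element `α_j` of `𝒫`. -/
def alP (j : Fin n) : PLat n := (fun k => if k = j then 1 else 0, 0)

/-- The basis element `ω_j` of `𝒫`. -/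
def omP (j : Fin n) : PLat n := (0, fun k => if k = j then 1 else 0)

/-- The biadditive pairing `𝒬^∨ × 𝒫 → ℤ` with `(αᵢ^∨, α_j) = a_{ij}` and
`(αᵢ^∨, ω_j) = δ_{ij}`. -/
def pairQP (A : Fin n → Fin n → ℤ) (x : QvLat n) (lam : PLat n) : ℤ :=
  (∑ a, ∑ b, x a * A a b * lam.1 b) + ∑ a, x a * lam.2 a

/-- The simple reflection `sᵢ` on `𝒫`: `sᵢ α_j = α_j - a_{ij} αᵢ`,
`sᵢ ω_j = ω_j - δ_{ij} αᵢ`. -/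
def sP (A : Fin n → Fin n → ℤ) (a : Fin n) (lam : PLat n) : PLat n :=
  (fun j => if j = a then lam.1 a - ((∑ k, A a k * lam.1 k) + lam.2 a) else lam.1 j,
   lam.2)

/-- The simple reflection `sᵢ^∨` on `𝒬^∨`: `sᵢ^∨ α_j^∨ = α_j^∨ - a_{ji} αᵢ^∨`. -/
def sQ (A : Fin n → Fin n → ℤ) (a : Fin n) (x : QvLat n) : QvLat n :=
  fun j => if j = a then x a - ∑ k, A k a * x k else x j

/-- `w_ℓ = s_{i₁} ∘ ⋯ ∘ s_{i_ℓ}` on `𝒫` (with `w₀ = id`). -/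
def wP (A : Fin n → Fin n → ℤ) (ii : ℕ → Fin n) : ℕ → PLat n → PLat n
  | 0 => id
  | (l+1) => wP A ii l ∘ sP A (ii (l+1))

/-- `w_ℓ^∨ = s_{i₁}^∨ ∘ ⋯ ∘ s_{i_ℓ}^∨` on `𝒬^∨` (with `w₀ = id`). -/
def wQ (A : Fin n → Fin n → ℤ) (ii : ℕ → Fin n) : ℕ → QvLat n → QvLat n
  | 0 => id
  | (l+1) => wQ A ii l ∘ sQ A (ii (l+1))

/-- `k⁺ = min({ℓ : k < ℓ ≤ m, i_ℓ = i_k} ∪ {m+1})`. -/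
noncomputable def kplus (ii : ℕ → Fin n) (m k : ℕ) : ℕ :=
  sInf ({l | k < l ∧ l ≤ m ∧ ii l = ii k} ∪ {m+1})

/-- `k⁻ = max({ℓ : 1 ≤ ℓ < k, i_ℓ = i_k} ∪ {0})`. -/
noncomputable def kminus (ii : ℕ → Fin n) (k : ℕ) : ℕ :=
  sSup ({l | 1 ≤ l ∧ l < k ∧ ii l = ii k} ∪ {0})

/-- The standard basis vector `ε_k` of `ℤ^m` (1-based index), with the convention
`ε_s = 0` for `s ∉ {1,…,m}`. -/
def eps (m k : ℕ) : Fin m → ℤ := fun j => if (j : ℕ) + 1 = k then 1 else 0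

/-- `φ_𝐢(ε_k) = -ε_k - ε_{k⁻} - ∑_{ℓ : ℓ < k < ℓ⁺} a_{i_ℓ i_k} ε_ℓ`. -/
noncomputable def phiE (A : Fin n → Fin n → ℤ) (ii : ℕ → Fin n) (m k : ℕ) :
    Fin m → ℤ :=
  -(eps m k) - eps m (kminus ii k)
    - ∑ l : Fin m, (if (l:ℕ)+1 < k ∧ k < kplus ii m ((l:ℕ)+1)
        then A (ii ((l:ℕ)+1)) (ii k) else 0) • eps m ((l:ℕ)+1)

/-- The endomorphism `φ_𝐢` of `ℤ^m`, extended additively from its values on the basis. -/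
noncomputable def phiMap (A : Fin n → Fin n → ℤ) (ii : ℕ → Fin n) (m : ℕ)
    (v : Fin m → ℤ) : Fin m → ℤ :=
  ∑ k : Fin m, v k • phiE A ii m ((k:ℕ)+1)

/-- `φ'_𝐢(ε_ℓ) = -∑_{k=1}^{ℓ} (w_k^∨ α_{i_k}^∨, w_ℓ ω_{i_ℓ}) ε_k`. -/
def phiE' (A : Fin n → Fin n → ℤ) (ii : ℕ → Fin n) (m l : ℕ) : Fin m → ℤ :=
  -∑ k : Fin m, (if (k:ℕ)+1 ≤ l then
      pairQP A (wQ A ii ((k:ℕ)+1) (coroot (ii ((k:ℕ)+1)))) (wP A ii l (omP (ii l)))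
    else 0) • eps m ((k:ℕ)+1)

/-- The endomorphism `φ'_𝐢` of `ℤ^m`, extended additively from its values on the basis. -/
def phiMap' (A : Fin n → Fin n → ℤ) (ii : ℕ → Fin n) (m : ℕ)
    (v : Fin m → ℤ) : Fin m → ℤ :=
  ∑ l : Fin m, v l • phiE' A ii m ((l:ℕ)+1)

/-- `∂_𝐢 ε_k = ε_k - ε_{k⁻}`. -/
noncomputable def derE (ii : ℕ → Fin n) (m k : ℕ) : Fin m → ℤ :=
  eps m k - eps m (kminus ii k)

/-- The endomorphism `∂_𝐢` of `ℤ^m`. -/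
noncomputable def derMap (ii : ℕ → Fin n) (m : ℕ) (v : Fin m → ℤ) : Fin m → ℤ :=
  ∑ k : Fin m, v k • derE ii m ((k:ℕ)+1)

/-- `∫_𝐢 ε_k = ε_k + ε_{k⁻} + ε_{(k⁻)⁻} + ⋯` (summing along the chain `k > k⁻ > ⋯ > 0`). -/
noncomputable def intE (ii : ℕ → Fin n) (m : ℕ) (k : ℕ) : Fin m → ℤ :=
  if h : kminus ii k < k then eps m k + intE ii m (kminus ii k) else eps m k
termination_by k
decreasing_by exact h

/-- The endomorphism `∫_𝐢` of `ℤ^m`. -/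
noncomputable def intMap (ii : ℕ → Fin n) (m : ℕ) (v : Fin m → ℤ) : Fin m → ℤ :=
  ∑ k : Fin m, v k • intE ii m ((k:ℕ)+1)

/-- The skew-symmetric biadditive form `Λ_𝐢` on `ℤ^m` with
`Λ_𝐢(ε_k, ε_ℓ) = sgn(k-ℓ) c_{i_k i_ℓ}` where `c_{ij} = dᵢ a_{ij}`. -/
def LamF (A : Fin n → Fin n → ℤ) (d : Fin n → ℤ) (ii : ℕ → Fin n) (m : ℕ)
    (a b : Fin m → ℤ) : ℤ :=
  ∑ k : Fin m, ∑ l : Fin m, a k * b l *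
    ((((k:ℕ):ℤ) - ((l:ℕ):ℤ)).sign *
      (d (ii ((k:ℕ)+1)) * A (ii ((k:ℕ)+1)) (ii ((l:ℕ)+1))))

/-- The biadditive form `Φ_𝐢` on `ℤ^m` with `Φ_𝐢(ε_k,ε_ℓ) = -d_{i_k}` if `k = ℓ`,
`= -c_{i_ℓ i_k}` if `ℓ < k`, and `= 0` if `ℓ > k`. -/
def PhiF (A : Fin n → Fin n → ℤ) (d : Fin n → ℤ) (ii : ℕ → Fin n) (m : ℕ)
    (a b : Fin m → ℤ) : ℤ :=
  ∑ k : Fin m, ∑ l : Fin m, a k * b l *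
    (if (k:ℕ) = (l:ℕ) then -(d (ii ((k:ℕ)+1)))
     else if (l:ℕ) < (k:ℕ) then
       -(d (ii ((l:ℕ)+1)) * A (ii ((l:ℕ)+1)) (ii ((k:ℕ)+1)))
     else 0)

/-- The entry `b_{pk}` of the exchange matrix `B̃_𝐢`. -/
noncomputable def bcoef (A : Fin n → Fin n → ℤ) (ii : ℕ → Fin n) (m p k : ℕ) : ℤ :=
  if p = kminus ii k then -1
  else if p < k ∧ k < kplus ii m p ∧ kplus ii m p < kplus ii m k then
    -(A (ii p) (ii k))
  else if k < p ∧ p < kplus ii m k ∧ kplus ii m k < kplus ii m p then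
    A (ii p) (ii k)
  else if p = kplus ii m k then 1
  else 0

/-- The column `𝐛^k = ∑_p b_{pk} ε_p ∈ ℤ^m` of the exchange matrix. -/
noncomputable def bvec (A : Fin n → Fin n → ℤ) (ii : ℕ → Fin n) (m k : ℕ) :
    Fin m → ℤ :=
  fun p => bcoef A ii m ((p:ℕ)+1) k

/-- `ρ_𝐢⁺(ε_k) = ε_k + ∑_{ℓ<k, ℓ⁺=m+1} a_{i_ℓ i_k} ε_ℓ`. -/
noncomputable def rhoPE (A : Fin n → Fin n → ℤ) (ii : ℕ → Fin n) (m k : ℕ) :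
    Fin m → ℤ :=
  eps m k + ∑ l : Fin m, (if (l:ℕ)+1 < k ∧ kplus ii m ((l:ℕ)+1) = m+1
      then A (ii ((l:ℕ)+1)) (ii k) else 0) • eps m ((l:ℕ)+1)

/-- `ρ_𝐢⁻(ε_k) = ε_k - ∑_{ℓ≤k, ℓ⁺=m+1} a_{i_ℓ i_k} ε_ℓ`. -/
noncomputable def rhoME (A : Fin n → Fin n → ℤ) (ii : ℕ → Fin n) (m k : ℕ) :
    Fin m → ℤ :=
  eps m k - ∑ l : Fin m, (if (l:ℕ)+1 ≤ k ∧ kplus ii m ((l:ℕ)+1) = m+1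
      then A (ii ((l:ℕ)+1)) (ii k) else 0) • eps m ((l:ℕ)+1)

/-- The endomorphism `ρ_𝐢⁺` of `ℤ^m`. -/
noncomputable def rhoPMap (A : Fin n → Fin n → ℤ) (ii : ℕ → Fin n) (m : ℕ)
    (v : Fin m → ℤ) : Fin m → ℤ :=
  ∑ k : Fin m, v k • rhoPE A ii m ((k:ℕ)+1)

/-- The endomorphism `ρ_𝐢⁻` of `ℤ^m`. -/
noncomputable def rhoMMap (A : Fin n → Fin n → ℤ) (ii : ℕ → Fin n) (m : ℕ)
    (v : Fin m → ℤ) : Fin m → ℤ :=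
  ∑ k : Fin m, v k • rhoME A ii m ((k:ℕ)+1)

/-- `𝐚_λ = -∑_{k=1}^m (w_k^∨ α_{i_k}^∨, w_m λ) ε_k ∈ ℤ^m`. -/
def avec (A : Fin n → Fin n → ℤ) (ii : ℕ → Fin n) (m : ℕ) (lam : PLat n) :
    Fin m → ℤ :=
  fun k => -(pairQP A (wQ A ii ((k:ℕ)+1) (coroot (ii ((k:ℕ)+1)))) (wP A ii m lam))

/-- `|𝐚| = ∑_{k=1}^m a_k α_{i_k} ∈ 𝒬 ⊆ 𝒫`. -/
def degP (ii : ℕ → Fin n) (m : ℕ) (a : Fin m → ℤ) : PLat n :=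
  (fun j => ∑ k : Fin m, if ii ((k:ℕ)+1) = j then a k else 0, 0)

/-- The pairing `(μ, λ) = ∑ mᵢ dᵢ (αᵢ^∨, λ)` for `μ = ∑ mᵢ αᵢ ∈ 𝒬` and `λ ∈ 𝒫`
(induced by identifying `αᵢ` with `dᵢ αᵢ^∨`). -/
def pairAl (A : Fin n → Fin n → ℤ) (d : Fin n → ℤ) (mu lam : PLat n) : ℤ :=
  ∑ j, mu.1 j * (d j * pairQP A (coroot j) lam)


/-! Writing `c^k_p = (w_p^∨ α_{i_p}^∨, w_k α_{i_k})` for `p < k` and `c^k_k = 1`, one has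
`φ'_𝐢(∂_𝐢 ε_k) = -∑_{p ≤ k} c^k_p ε_p`; this comes from
`w_k ω_{i_k} = w_{k⁻} ω_{i_k} + w_k α_{i_k}`, since the `s_{i_r}` with `k⁻ < r < k` fix `ω_{i_k}`.
Expanding `s_{i_{p+1}} ⋯ s_{i_k} α_{i_k}` in the simple roots shows that these coefficients satisfy
`∑_{p < r ≤ k} c^k_r a_{i_p i_r} = -c^k_p`. For `k < ℓ`, this recursion for `c^ℓ` evaluates the
inner sum of `Λ_𝐢`, and after exchanging the order of summation the recursion for `c^k` cancels
everything except the diagonal term `d_{i_k} c^ℓ_k`, which is `(w_k α_{i_k}, w_ℓ α_{i_ℓ})` by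
`W`-invariance of the pairing. The other cases follow by skew-symmetry of `Λ_𝐢` and symmetry of
the pairing. -/

section Reflections

variable {A : Fin n → Fin n → ℤ}

theorem pairQP_coroot (j : Fin n) (lam : PLat n) :
    pairQP A (coroot j) lam = ∑ b, A j b * lam.1 b + lam.2 j := by
  simp [pairQP, coroot, ite_mul]

theorem pairQP_coroot_alP (i j : Fin n) : pairQP A (coroot i) (alP j) = A i j := by
  simp [pairQP_coroot, alP]

theorem pairQP_coroot_omP (i j : Fin n) :
    pairQP A (coroot i) (omP j) = if i = j then 1 else 0 := by
  simp [pairQP_coroot, omP]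

theorem pairQP_alP (x : QvLat n) (a : Fin n) : pairQP A x (alP a) = ∑ j, x j * A j a := by
  simp [pairQP, alP]

variable (A) in
def pairQPHom (x : QvLat n) : PLat n →+ ℤ :=
  AddMonoidHom.mk' (pairQP A x) fun lam mu => by
    simp only [pairQP, Prod.fst_add, Prod.snd_add, Pi.add_apply, mul_add, sum_add_distrib]
    ring

theorem pairQP_add_right (x : QvLat n) (lam mu : PLat n) :
    pairQP A x (lam + mu) = pairQP A x lam + pairQP A x mu :=
  map_add (pairQPHom A x) lam mu

theorem pairQP_sub_right (x : QvLat n) (lam mu : PLat n) :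
    pairQP A x (lam - mu) = pairQP A x lam - pairQP A x mu :=
  map_sub (pairQPHom A x) lam mu

theorem pairQP_zsmul_right (x : QvLat n) (c : ℤ) (lam : PLat n) :
    pairQP A x (c • lam) = c * pairQP A x lam :=
  map_zsmul (pairQPHom A x) c lam

theorem pairQP_sum_right {ι : Type*} (x : QvLat n) (s : Finset ι) (f : ι → PLat n) :
    pairQP A x (∑ r ∈ s, f r) = ∑ r ∈ s, pairQP A x (f r) :=
  map_sum (pairQPHom A x) f s

theorem sP_eq (a : Fin n) (lam : PLat n) :
    sP A a lam = lam - pairQP A (coroot a) lam • alP a := by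
  ext j
  · by_cases h : j = a <;> simp [sP, pairQP_coroot, alP, h]
  · simp [sP, alP]

theorem sP_add (a : Fin n) (lam mu : PLat n) :
    sP A a (lam + mu) = sP A a lam + sP A a mu := by
  simp only [sP_eq, pairQP_add_right, add_smul]
  abel

theorem pairQP_sP (x : QvLat n) (a : Fin n) (lam : PLat n) :
    pairQP A x (sP A a lam) =
      pairQP A x lam - (∑ j, x j * A j a) * pairQP A (coroot a) lam := by
  rw [sP_eq, pairQP_sub_right, pairQP_zsmul_right, pairQP_alP, mul_comm]

theorem pairQP_eq_sum (x : QvLat n) (lam : PLat n) :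
    pairQP A x lam = ∑ j, x j * pairQP A (coroot j) lam := by
  rw [pairQP]
  simp only [pairQP_coroot, mul_add, sum_add_distrib, mul_sum, mul_assoc]

theorem pairQP_sQ (x : QvLat n) (a : Fin n) (lam : PLat n) :
    pairQP A (sQ A a x) lam =
      pairQP A x lam - (∑ j, x j * A j a) * pairQP A (coroot a) lam := by
  have hx : ∀ j, sQ A a x j = x j - if j = a then ∑ k, x k * A k a else 0 := by
    intro j; by_cases h : j = a <;> simp [sQ, h, mul_comm]
  simp only [pairQP_eq_sum (sQ A a x), hx, sub_mul, sum_sub_distrib, ite_mul, zero_mul,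
    sum_ite_eq', mem_univ, if_true, ← pairQP_eq_sum]

theorem pairQP_sQ_eq_pairQP_sP (x : QvLat n) (a : Fin n) (lam : PLat n) :
    pairQP A (sQ A a x) lam = pairQP A x (sP A a lam) := by
  rw [pairQP_sQ, pairQP_sP]

theorem sP_sP (hA : ∀ i, A i i = 2) (a : Fin n) (lam : PLat n) : sP A a (sP A a lam) = lam := by
  have h : pairQP A (coroot a) (sP A a lam) = -pairQP A (coroot a) lam := by
    simp [pairQP_sP, coroot, hA]; ring
  rw [sP_eq (lam := sP A a lam), h, sP_eq, neg_smul, sub_neg_eq_add, sub_add_cancel]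

end Reflections

section WeylWords

variable {A : Fin n → Fin n → ℤ} {ii : ℕ → Fin n}

theorem wP_succ_apply (l : ℕ) (lam : PLat n) :
    wP A ii (l + 1) lam = wP A ii l (sP A (ii (l + 1)) lam) :=
  rfl

theorem wQ_succ_apply (l : ℕ) (x : QvLat n) :
    wQ A ii (l + 1) x = wQ A ii l (sQ A (ii (l + 1)) x) :=
  rfl

theorem wP_snd (l : ℕ) (lam : PLat n) : (wP A ii l lam).2 = lam.2 := by
  induction l generalizing lam with
  | zero => rfl
  | succ l ih => exact ih _

theorem wP_add (l : ℕ) (lam mu : PLat n) :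
    wP A ii l (lam + mu) = wP A ii l lam + wP A ii l mu := by
  induction l generalizing lam mu with
  | zero => rfl
  | succ l ih => rw [wP_succ_apply, wP_succ_apply, wP_succ_apply, sP_add, ih]

theorem pairQP_wQ_wP (hA : ∀ i, A i i = 2) (p : ℕ) (x : QvLat n) (lam : PLat n) :
    pairQP A (wQ A ii p x) (wP A ii p lam) = pairQP A x lam := by
  induction p generalizing x lam with
  | zero => rfl
  | succ p ih => rw [wQ_succ_apply, wP_succ_apply, ih, pairQP_sQ_eq_pairQP_sP, sP_sP hA]

theorem sP_omP_of_ne {a c : Fin n} (h : a ≠ c) : sP A a (omP c) = omP c := by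
  simp [sP_eq, pairQP_coroot_omP, h]

theorem wP_omP_of_ne {c : Fin n} {s r : ℕ} (hsr : s ≤ r) (h : ∀ t, s < t → t ≤ r → ii t ≠ c) :
    wP A ii r (omP c) = wP A ii s (omP c) := by
  induction r, hsr using Nat.le_induction with
  | base => rfl
  | succ r hsr ih =>
    rw [wP_succ_apply, sP_omP_of_ne (h _ (by omega) le_rfl),
      ih fun t h₁ h₂ => h t h₁ (by omega)]

theorem wP_succ_omP_self (hA : ∀ i, A i i = 2) (l : ℕ) :
    wP A ii (l + 1) (omP (ii (l + 1))) =
      wP A ii l (omP (ii (l + 1))) + wP A ii (l + 1) (alP (ii (l + 1))) := by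
  have hom : sP A (ii (l + 1)) (omP (ii (l + 1))) = omP (ii (l + 1)) + -alP (ii (l + 1)) := by
    simp [sP_eq, pairQP_coroot_omP, sub_eq_add_neg]
  have hal : sP A (ii (l + 1)) (alP (ii (l + 1))) = -alP (ii (l + 1)) := by
    rw [sP_eq, pairQP_coroot_alP, hA]
    ext <;> simp [alP]; split_ifs <;> norm_num
  rw [wP_succ_apply, wP_succ_apply, hom, hal, wP_add]

end WeylWords

section KMinus

variable {ii : ℕ → Fin n} {k : ℕ}

theorem bddAbove_kminus_set (ii : ℕ → Fin n) (k : ℕ) :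
    BddAbove ({l | 1 ≤ l ∧ l < k ∧ ii l = ii k} ∪ {0} : Set ℕ) :=
  ⟨k, by rintro x (h | h); exacts [h.2.1.le, by simp_all]⟩

theorem kminus_mem (ii : ℕ → Fin n) (k : ℕ) :
    kminus ii k ∈ ({l | 1 ≤ l ∧ l < k ∧ ii l = ii k} ∪ {0} : Set ℕ) :=
  Nat.sSup_mem ⟨0, Or.inr rfl⟩ (bddAbove_kminus_set ii k)

theorem kminus_lt (hk : 1 ≤ k) : kminus ii k < k := by
  rcases kminus_mem ii k with h | h
  · exact h.2.1
  · simp only [Set.mem_singleton_iff] at h; omega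

theorem ii_kminus (h : 1 ≤ kminus ii k) : ii (kminus ii k) = ii k := by
  rcases kminus_mem ii k with h' | h'
  · exact h'.2.2
  · simp only [Set.mem_singleton_iff] at h'; omega

theorem ii_ne_of_kminus_lt {r : ℕ} (h₁ : kminus ii k < r) (h₂ : r < k) : ii r ≠ ii k := by
  intro h
  have : r ≤ kminus ii k := le_csSup (bddAbove_kminus_set ii k) (Or.inl ⟨by omega, h₂, h⟩)
  omega

end KMinus

section RootExpansion

variable {A : Fin n → Fin n → ℤ} {ii : ℕ → Fin n}

variable (A ii) in
def rootPair (l p : ℕ) : ℤ :=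
  pairQP A (wQ A ii p (coroot (ii p))) (wP A ii l (alP (ii l)))

variable (A ii) in
/-- The expansion of `s_{i_{p+1}} ⋯ s_{i_l} α_{i_l}` in the simple roots, for `p ≤ l`. -/
def rootExp (l p : ℕ) : PLat n :=
  alP (ii l) - ∑ r ∈ Ioc p l, rootPair A ii l r • alP (ii r)

theorem wP_rootExp (hA : ∀ i, A i i = 2) {l p : ℕ} (hpl : p ≤ l) :
    wP A ii p (rootExp A ii l p) = wP A ii l (alP (ii l)) := by
  induction hpl using Nat.decreasingInduction with
  | self => simp [rootExp]
  | of_succ p hpl ih =>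
    have hpair :
        pairQP A (coroot (ii (p + 1))) (rootExp A ii l (p + 1)) = rootPair A ii l (p + 1) := by
      rw [rootPair, ← ih, pairQP_wQ_wP hA]
    have hIoc : Ioc p l = insert (p + 1) (Ioc (p + 1) l) := by
      ext r; simp only [mem_Ioc, mem_insert]; omega
    have hstep : rootExp A ii l p = sP A (ii (p + 1)) (rootExp A ii l (p + 1)) := by
      rw [sP_eq, hpair, rootExp, rootExp, hIoc, sum_insert (by simp)]
      abel
    rw [hstep, ← wP_succ_apply, ih]

theorem rootPair_eq_pairQP_rootExp (hA : ∀ i, A i i = 2) {l p : ℕ} (hpl : p ≤ l) :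
    rootPair A ii l p = pairQP A (coroot (ii p)) (rootExp A ii l p) := by
  rw [rootPair, ← wP_rootExp hA hpl, pairQP_wQ_wP hA]

theorem rootPair_self (hA : ∀ i, A i i = 2) (l : ℕ) : rootPair A ii l l = 2 := by
  rw [rootPair, pairQP_wQ_wP hA, pairQP_coroot_alP, hA]

theorem rootPair_eq_sub_sum (hA : ∀ i, A i i = 2) {l p : ℕ} (hpl : p ≤ l) :
    rootPair A ii l p =
      A (ii p) (ii l) - ∑ r ∈ Ioc p l, rootPair A ii l r * A (ii p) (ii r) := by
  simp only [rootPair_eq_pairQP_rootExp hA hpl, rootExp, pairQP_sub_right, pairQP_sum_right,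
    pairQP_zsmul_right, pairQP_coroot_alP]

end RootExpansion

section Coordinates

variable {A : Fin n → Fin n → ℤ} {ii : ℕ → Fin n}

variable (A ii) in
/-- Up to sign, the coordinates of `φ'_𝐢(∂_𝐢 ε_l)`. -/
def chainCoeff (l p : ℕ) : ℤ :=
  if p = l then 1 else if p < l then rootPair A ii l p else 0

theorem sum_Ioo_chainCoeff_mul (hA : ∀ i, A i i = 2) {l p N : ℕ} (hpl : p < l)
    (hlN : l < N) :
    ∑ r ∈ Ioo p N, chainCoeff A ii l r * A (ii p) (ii r) = -chainCoeff A ii l p := by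
  have hsupp : Ioc p l ⊆ Ioo p N := fun r hr => by simp only [mem_Ioc, mem_Ioo] at hr ⊢; omega
  have h : ∀ r ∈ Ioc p l, chainCoeff A ii l r * A (ii p) (ii r) =
      rootPair A ii l r * A (ii p) (ii r) - if r = l then A (ii p) (ii r) else 0 := by
    intro r hr
    rw [mem_Ioc] at hr
    rcases hr.2.lt_or_eq with h | rfl
    · simp [chainCoeff, h, h.ne]
    · simp [chainCoeff, rootPair_self hA]; ring
  rw [← sum_subset hsupp fun r hr hr' => by
      simp only [mem_Ioc, mem_Ioo] at hr hr'
      simp [chainCoeff, show r ≠ l by omega, show ¬r < l by omega],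
    sum_congr rfl h, sum_sub_distrib, sum_ite_eq' _ _ (fun r => A (ii p) (ii r)),
    if_pos (right_mem_Ioc.2 hpl), chainCoeff, if_neg hpl.ne, if_pos hpl,
    rootPair_eq_sub_sum hA hpl.le]
  ring

theorem pairQP_wP_omP_sub_kminus (hA : ∀ i, A i i = 2) {k p : ℕ} (hk : 1 ≤ k)
    (hpk : p ≤ k) :
    pairQP A (wQ A ii p (coroot (ii p))) (wP A ii k (omP (ii k))) -
        (if p ≤ kminus ii k then
          pairQP A (wQ A ii p (coroot (ii p))) (wP A ii (kminus ii k) (omP (ii k)))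
        else 0) =
      chainCoeff A ii k p := by
  obtain ⟨k, rfl⟩ : ∃ k', k = k' + 1 := ⟨k - 1, by omega⟩
  have hω : ∀ s, kminus ii (k + 1) ≤ s → s ≤ k →
      wP A ii (k + 1) (omP (ii (k + 1))) =
        wP A ii s (omP (ii (k + 1))) + wP A ii (k + 1) (alP (ii (k + 1))) := by
    intro s hs hsk
    rw [wP_succ_omP_self hA,
      wP_omP_of_ne hsk fun t h₁ h₂ => ii_ne_of_kminus_lt (by omega) (by omega)]
  rcases hpk.lt_or_eq with hpk | rfl
  · by_cases hpm : p ≤ kminus ii (k + 1)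
    · rw [hω _ le_rfl (by have := kminus_lt (ii := ii) hk; omega), pairQP_add_right,
        if_pos hpm]
      simp [chainCoeff, hpk, hpk.ne, rootPair]
    · rw [hω p (by omega) (by omega), pairQP_add_right, if_neg hpm, pairQP_wQ_wP hA,
        pairQP_coroot_omP, if_neg (ii_ne_of_kminus_lt (by omega) hpk)]
      simp [chainCoeff, hpk, hpk.ne, rootPair]
  · have := kminus_lt (ii := ii) hk
    rw [if_neg (by omega), pairQP_wQ_wP hA, pairQP_coroot_omP]
    simp [chainCoeff]

end Coordinates

section StandardBasis

variable {m : ℕ}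

theorem sum_smul_eps_apply (c : Fin m → ℤ) (j : Fin m) :
    (∑ r : Fin m, c r • eps m ((r : ℕ) + 1)) j = c j := by
  simp [eps, Fin.val_inj]

theorem sum_eps_smul {M : Type*} [AddCommGroup M] {k : ℕ} (hk : k ≤ m) (F : ℕ → M) :
    ∑ r : Fin m, eps m k r • F ((r : ℕ) + 1) = if k = 0 then 0 else F k := by
  split_ifs with h
  · simp [eps, h]
  · rw [sum_eq_single ⟨k - 1, by omega⟩
      (fun r _ hr => by simp [eps, Fin.ext_iff] at hr ⊢; omega) (by simp)]
    simp [eps, show k - 1 + 1 = k by omega]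

end StandardBasis

section PhiDer

variable {A : Fin n → Fin n → ℤ} {ii : ℕ → Fin n} {m : ℕ}

theorem derMap_eps {k : ℕ} (hk1 : 1 ≤ k) (hk2 : k ≤ m) :
    derMap ii m (eps m k) = derE ii m k := by
  rw [derMap, sum_eps_smul hk2, if_neg (by omega)]

theorem phiMap'_eps {k : ℕ} (hk : k ≤ m) : phiMap' A ii m (eps m k) = phiE' A ii m k := by
  rw [phiMap', sum_eps_smul hk]
  split_ifs with h
  · ext j; simp [phiE', h]
  · rfl

theorem phiMap'_sub (u v : Fin m → ℤ) :
    phiMap' A ii m (u - v) = phiMap' A ii m u - phiMap' A ii m v := by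
  simp [phiMap', sub_smul, sum_sub_distrib]

theorem phiE'_apply (l : ℕ) (j : Fin m) :
    phiE' A ii m l j = -if (j : ℕ) + 1 ≤ l then
      pairQP A (wQ A ii ((j : ℕ) + 1) (coroot (ii ((j : ℕ) + 1)))) (wP A ii l (omP (ii l)))
    else 0 := by
  rw [phiE', Pi.neg_apply, sum_smul_eps_apply]

theorem phiMap'_derMap_eps (hA : ∀ i, A i i = 2) {k : ℕ} (hk1 : 1 ≤ k) (hk2 : k ≤ m) :
    phiMap' A ii m (derMap ii m (eps m k)) =
      fun j : Fin m => -chainCoeff A ii k ((j : ℕ) + 1) := by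
  have hkm := kminus_lt (ii := ii) hk1
  ext j
  rw [derMap_eps hk1 hk2, derE, phiMap'_sub, phiMap'_eps hk2, phiMap'_eps (by omega),
    Pi.sub_apply, phiE'_apply, phiE'_apply]
  by_cases hjk : (j : ℕ) + 1 ≤ k
  · rw [if_pos hjk, ← pairQP_wP_omP_sub_kminus hA hk1 hjk]
    split_ifs with h
    · rw [ii_kminus (ii := ii) (k := k) (by omega)]; ring
    · ring
  · rw [if_neg hjk, if_neg (by omega), chainCoeff, if_neg (by omega), if_neg (by omega)]
    simp

end PhiDer

section SignedSums

theorem sum_Ico_sign_mul {a p N : ℕ} (hap : a ≤ p) (hpN : p < N) (B : ℕ → ℕ → ℤ)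
    (y : ℕ → ℤ) :
    ∑ q ∈ Ico a N, y q * (((p : ℤ) - q).sign * B p q) =
      ∑ q ∈ Ico a p, y q * B p q - ∑ q ∈ Ioo p N, y q * B p q := by
  rw [← sum_Ico_consecutive _ hap hpN.le, ← Ioo_insert_left hpN, sum_insert (by simp), sub_self,
    Int.sign_zero, zero_mul, mul_zero, zero_add, sub_eq_add_neg, ← sum_neg_distrib]
  congr 1
  · refine sum_congr rfl fun q hq => ?_
    rw [mem_Ico] at hq
    rw [Int.sign_eq_one_of_pos (by omega), one_mul]
  · refine sum_congr rfl fun q hq => ?_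
    rw [mem_Ioo] at hq
    rw [Int.sign_eq_neg_one_of_neg (by omega)]
    ring

theorem sum_Ico_sum_Ico_sign_mul {a k N : ℕ} (hak : a ≤ k) (hkN : k < N) {B : ℕ → ℕ → ℤ}
    (hB : ∀ p q, B p q = B q p) {δ x y : ℕ → ℤ} (hx0 : ∀ p, k < p → x p = 0)
    (hx : ∀ p, a ≤ p → p < k → ∑ q ∈ Ioo p N, x q * B p q = -(δ p * x p))
    (hy : ∀ p, a ≤ p → p ≤ k → ∑ q ∈ Ioo p N, y q * B p q = -(δ p * y p)) :
    ∑ p ∈ Ico a N, ∑ q ∈ Ico a N, x p * y q * (((p : ℤ) - q).sign * B p q) =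
      δ k * x k * y k := by
  have hsupp : Icc a k ⊆ Ico a N := fun p hp => by simp only [mem_Icc, mem_Ico] at hp ⊢; omega
  have hinner : ∀ p ∈ Icc a k, ∑ q ∈ Ico a N, x p * y q * (((p : ℤ) - q).sign * B p q) =
      ∑ q ∈ Ico a p, x p * y q * B q p + δ p * x p * y p := by
    intro p hp
    rw [mem_Icc] at hp
    simp only [mul_assoc, ← mul_sum]
    rw [sum_Ico_sign_mul hp.1 (by omega), hy p hp.1 hp.2]
    simp only [hB p]
    ring
  have hswap : ∑ p ∈ Icc a k, ∑ q ∈ Ico a p, x p * y q * B q p =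
      ∑ q ∈ Ico a k, y q * ∑ p ∈ Ioo q N, x p * B q p := by
    rw [sum_comm' (t' := Ico a k) (s' := fun q => Ioc q k) fun p q => by
      simp only [mem_Icc, mem_Ico, mem_Ioc]; omega]
    refine sum_congr rfl fun q _ => ?_
    have hIoc : Ioc q k ⊆ Ioo q N := fun p hp => by simp only [mem_Ioc, mem_Ioo] at hp ⊢; omega
    rw [mul_sum, ← sum_subset hIoc fun p hp hp' => by
      simp only [mem_Ioc, mem_Ioo] at hp hp'; rw [hx0 p (by omega)]; ring]
    exact sum_congr rfl fun p _ => by ring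
  have hdiag : ∑ q ∈ Ico a k, y q * ∑ p ∈ Ioo q N, x p * B q p =
      -∑ q ∈ Ico a k, δ q * x q * y q := by
    rw [← sum_neg_distrib]
    refine sum_congr rfl fun q hq => ?_
    rw [mem_Ico] at hq
    rw [hx q hq.1 hq.2]
    ring
  rw [← sum_subset hsupp fun p _ hp => by
      simp only [mem_Icc, mem_Ico] at *; simp [hx0 p (by omega)],
    sum_congr rfl hinner, sum_add_distrib, hswap, hdiag, ← Ico_insert_right hak,
    sum_insert (by simp)]
  ring

end SignedSums

section RootPairing

variable {A : Fin n → Fin n → ℤ} {d : Fin n → ℤ} {ii : ℕ → Fin n}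

/-- The identification `αᵢ ↦ dᵢ αᵢ^∨` on the root lattice (`ω`-coordinates are ignored). -/
def toCoroot (d : Fin n → ℤ) (mu : PLat n) : QvLat n := fun j => d j * mu.1 j

theorem pairAl_eq_pairQP_toCoroot (mu lam : PLat n) :
    pairAl A d mu lam = pairQP A (toCoroot d mu) lam := by
  simp only [pairAl, pairQP_eq_sum (toCoroot d mu), toCoroot]
  exact sum_congr rfl fun j _ => by ring

theorem toCoroot_sP (hsym : ∀ i j, d i * A i j = d j * A j i) (a : Fin n) {mu : PLat n}
    (hmu : mu.2 = 0) : toCoroot d (sP A a mu) = sQ A a (toCoroot d mu) := by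
  ext j
  by_cases h : j = a
  · subst h
    simp only [toCoroot, sP, sQ, if_true, hmu, Pi.zero_apply, add_zero, mul_sub, mul_sum]
    exact congrArg _ (sum_congr rfl fun k _ => by rw [← mul_assoc, hsym]; ring)
  · simp [toCoroot, sP, sQ, h]

theorem toCoroot_wP (hsym : ∀ i j, d i * A i j = d j * A j i) (p : ℕ) {mu : PLat n}
    (hmu : mu.2 = 0) : toCoroot d (wP A ii p mu) = wQ A ii p (toCoroot d mu) := by
  induction p generalizing mu with
  | zero => rfl
  | succ p ih =>
    rw [wP_succ_apply, wQ_succ_apply, ih (mu := sP A _ mu) hmu, toCoroot_sP hsym _ hmu]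

theorem pairAl_wP_wP (hA : ∀ i, A i i = 2) (hsym : ∀ i j, d i * A i j = d j * A j i) (p : ℕ)
    {mu : PLat n} (hmu : mu.2 = 0) (lam : PLat n) :
    pairAl A d (wP A ii p mu) (wP A ii p lam) = pairAl A d mu lam := by
  rw [pairAl_eq_pairQP_toCoroot, toCoroot_wP hsym p hmu, pairQP_wQ_wP hA,
    pairAl_eq_pairQP_toCoroot]

theorem pairAl_alP (i : Fin n) (lam : PLat n) :
    pairAl A d (alP i) lam = d i * pairQP A (coroot i) lam := by
  simp [pairAl, alP]

theorem pairAl_comm (hsym : ∀ i j, d i * A i j = d j * A j i) {mu lam : PLat n}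
    (hmu : mu.2 = 0) (hlam : lam.2 = 0) : pairAl A d mu lam = pairAl A d lam mu := by
  simp only [pairAl, pairQP_coroot, hmu, hlam, Pi.zero_apply, add_zero, mul_sum]
  rw [sum_comm]
  exact sum_congr rfl fun i _ => sum_congr rfl fun j _ => by
    rw [← mul_assoc (d i), hsym]; ring

theorem pairAl_wP_alP (hA : ∀ i, A i i = 2) (hsym : ∀ i j, d i * A i j = d j * A j i)
    {k l : ℕ} (hkl : k ≤ l) :
    pairAl A d (wP A ii k (alP (ii k))) (wP A ii l (alP (ii l))) =
      d (ii k) * rootPair A ii l k := by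
  rw [← wP_rootExp hA hkl, pairAl_wP_wP hA hsym k rfl, pairAl_alP,
    rootPair_eq_pairQP_rootExp hA hkl]

end RootPairing

section Lambda

variable {A : Fin n → Fin n → ℤ} {d : Fin n → ℤ} {ii : ℕ → Fin n} {m : ℕ}

theorem LamF_swap (hsym : ∀ i j, d i * A i j = d j * A j i) (u v : Fin m → ℤ) :
    LamF A d ii m u v = -LamF A d ii m v u := by
  rw [LamF, LamF, sum_comm, ← sum_neg_distrib]
  refine sum_congr rfl fun r _ => ?_
  rw [← sum_neg_distrib]
  refine sum_congr rfl fun s _ => ?_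
  rw [hsym, ← neg_sub, Int.sign_neg]
  ring

theorem LamF_self (hsym : ∀ i j, d i * A i j = d j * A j i) (u : Fin m → ℤ) :
    LamF A d ii m u u = 0 := by
  have := LamF_swap (ii := ii) hsym u u
  omega

theorem LamF_eq_sum_Ico (x y : ℕ → ℤ) :
    LamF A d ii m (fun j => x ((j : ℕ) + 1)) (fun j => y ((j : ℕ) + 1)) =
      ∑ p ∈ Ico 1 (m + 1), ∑ q ∈ Ico 1 (m + 1),
        x p * y q * (((p : ℤ) - q).sign * (d (ii p) * A (ii p) (ii q))) := by
  simp only [LamF, sum_Ico_eq_sum_range, add_tsub_cancel_right]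
  rw [← Fin.sum_univ_eq_sum_range]
  refine sum_congr rfl fun r _ => ?_
  rw [← Fin.sum_univ_eq_sum_range]
  refine sum_congr rfl fun s _ => ?_
  simp only [add_comm 1]
  push_cast
  ring_nf

theorem LamF_phiMap'_derMap_of_lt (hA : ∀ i, A i i = 2)
    (hsym : ∀ i j, d i * A i j = d j * A j i)
    {k l : ℕ} (hk : 1 ≤ k) (hkl : k < l) (hl : l ≤ m) :
    LamF A d ii m (phiMap' A ii m (derMap ii m (eps m k)))
        (phiMap' A ii m (derMap ii m (eps m l))) = d (ii k) * rootPair A ii l k := by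
  have hrec : ∀ l', l' ≤ m → ∀ p, p < l' →
      ∑ q ∈ Ioo p (m + 1), -chainCoeff A ii l' q * (d (ii p) * A (ii p) (ii q)) =
        -(d (ii p) * -chainCoeff A ii l' p) := by
    intro l' hl' p hp
    simp only [neg_mul, sum_neg_distrib, mul_left_comm _ (d (ii p)), ← mul_sum,
      sum_Ioo_chainCoeff_mul hA hp (Nat.lt_succ_of_le hl')]
    ring
  rw [phiMap'_derMap_eps hA hk (by omega), phiMap'_derMap_eps hA (by omega) hl,
    LamF_eq_sum_Ico (fun p => -chainCoeff A ii k p) (fun p => -chainCoeff A ii l p),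
    sum_Ico_sum_Ico_sign_mul hk (by omega) (fun p q => hsym (ii p) (ii q))
      (fun p hp => by simp [chainCoeff, hp.ne', hp.not_gt])
      (fun p _ hp => hrec k (by omega) p hp) (fun p _ hp => hrec l hl p (by omega))]
  simp [chainCoeff, hkl, hkl.ne]

end Lambda

theorem Lambda_phi'_der_general {n m : ℕ}
    (A : Fin n → Fin n → ℤ) (d : Fin n → ℤ)
    (hA : ∀ i, A i i = 2)
    (hsym : ∀ i j, d i * A i j = d j * A j i)
    (ii : ℕ → Fin n)
    (k : ℕ) (hk1 : 1 ≤ k) (hk2 : k ≤ m)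
    (l : ℕ) (hl1 : 1 ≤ l) (hl2 : l ≤ m) :
    LamF A d ii m (phiMap' A ii m (derMap ii m (eps m k)))
        (phiMap' A ii m (derMap ii m (eps m l))) =
      ((l : ℤ) - (k : ℤ)).sign *
        pairAl A d (wP A ii k (alP (ii k))) (wP A ii l (alP (ii l))) := by
  rcases lt_trichotomy k l with hkl | rfl | hlk
  · rw [LamF_phiMap'_derMap_of_lt hA hsym hk1 hkl hl2, pairAl_wP_alP hA hsym hkl.le,
      Int.sign_eq_one_of_pos (by omega), one_mul]
  · rw [LamF_self hsym, sub_self, Int.sign_zero, zero_mul]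
  · rw [LamF_swap hsym, LamF_phiMap'_derMap_of_lt hA hsym hl1 hlk hk2,
      pairAl_comm hsym (wP_snd _ _) (wP_snd _ _), pairAl_wP_alP hA hsym hlk.le,
      Int.sign_eq_neg_one_of_neg (by omega)]
    ring

/-- `Λ_𝐢(φ'_𝐢(∂_𝐢 ε_k), φ'_𝐢(∂_𝐢 ε_ℓ)) = sgn(ℓ-k) (w_k α_{i_k}, w_ℓ α_{i_ℓ})`. -/
theorem Lambda_phi'_der {n m : ℕ} (hm : 1 ≤ m)
    (A : Fin n → Fin n → ℤ) (d : Fin n → ℤ)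
    (hA : ∀ i, A i i = 2) (hd : ∀ i, 0 < d i)
    (hsym : ∀ i j, d i * A i j = d j * A j i)
    (ii : ℕ → Fin n)
    (k : ℕ) (hk1 : 1 ≤ k) (hk2 : k ≤ m)
    (l : ℕ) (hl1 : 1 ≤ l) (hl2 : l ≤ m) :
    LamF A d ii m (phiMap' A ii m (derMap ii m (eps m k)))
        (phiMap' A ii m (derMap ii m (eps m l))) =
      ((l : ℤ) - (k : ℤ)).sign *
        pairAl A d (wP A ii k (alP (ii k))) (wP A ii l (alP (ii l))) :=
  Lambda_phi'_der_general A d hA hsym ii k hk1 hk2 l hl1 hl2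
end

section
/- Assume that $\mathbf{ex}$ is an initial segment, i.e. $\mathbf{ex}=\{1,\dots,m-r\}$ where $r$ is the number of indices $k\in[1,m]$ with $k^+=m+1$. Define $\delta_\ell=0$ if $\ell\in\mathbf{ex}$ and $\delta_\ell=1$ otherwise, and for $k\in\mathbf{ex}$ set $\mathbf{b}^k_\pm=\sum_{p\in\mathbf{ex}} b_{pk}\varepsilon_p\pm\delta_{k^+}\varepsilon_{k^+}$. Then $\rho_\mathbf{i}^+(\mathbf{b}^k_+)=\mathbf{b}^k$ and $\rho_\mathbf{i}^-(\mathbf{b}^k_-)=\mathbf{b}^k$ for every $k\in\mathbf{ex}$. -/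
open Finset

variable {n : ℕ}

/-- `δ_ℓ = 0` if `ℓ ∈ 𝐞𝐱` and `δ_ℓ = 1` otherwise. -/
noncomputable def deltaEx (ii : ℕ → Fin n) (m l : ℕ) : ℤ :=
  if 1 ≤ l ∧ kplus ii m l ≤ m then 0 else 1

/-- The truncation `𝐛^k₊ = ∑_{p ∈ 𝐞𝐱} b_{pk} ε_p + δ_{k⁺} ε_{k⁺}`. -/
noncomputable def bvecP (A : Fin n → Fin n → ℤ) (ii : ℕ → Fin n) (m k : ℕ) :
    Fin m → ℤ :=
  ((fun p : Fin m => if kplus ii m ((p:ℕ)+1) ≤ m then bcoef A ii m ((p:ℕ)+1) k else 0) : Fin m → ℤ)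
    + deltaEx ii m (kplus ii m k) • eps m (kplus ii m k)

/-- The truncation `𝐛^k₋ = ∑_{p ∈ 𝐞𝐱} b_{pk} ε_p - δ_{k⁺} ε_{k⁺}`. -/
noncomputable def bvecM (A : Fin n → Fin n → ℤ) (ii : ℕ → Fin n) (m k : ℕ) :
    Fin m → ℤ :=
  ((fun p : Fin m => if kplus ii m ((p:ℕ)+1) ≤ m then bcoef A ii m ((p:ℕ)+1) k else 0) : Fin m → ℤ)
    - deltaEx ii m (kplus ii m k) • eps m (kplus ii m k)

/-!
When `𝐞𝐱` is an initial segment, every correction term of `ρ_𝐢^±(ε_ℓ)` sits at a frozen index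
`≤ ℓ`, and no frozen index lies below an index of `𝐞𝐱`; so `ρ_𝐢^±` fixes every vector supported
on `𝐞𝐱`. By linearity
`ρ_𝐢^±(𝐛^k_±) = ∑_{p ∈ 𝐞𝐱} b_{pk} ε_p ± δ_{k⁺} ρ_𝐢^±(ε_{k⁺})`, and it remains to see that the frozen
coordinates of `𝐛^k` are those of `± δ_{k⁺} ρ_𝐢^±(ε_{k⁺})`: at a frozen `p` (necessarily `p > k`)
only the cases `k < p < k⁺` and `p = k⁺` of `b_{pk}` survive, and for `ρ_𝐢⁻` the diagonal term at
`p = k⁺` contributes `a_{i_k i_k} - 1 = 1`.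
-/

variable {m : ℕ} {ii : ℕ → Fin n}

lemma kplus_le_succ (ii : ℕ → Fin n) (m k : ℕ) : kplus ii m k ≤ m + 1 :=
  Nat.sInf_le (Or.inr rfl)

lemma lt_kplus_and_ii_kplus {k : ℕ} (h : kplus ii m k ≤ m) :
    k < kplus ii m k ∧ ii (kplus ii m k) = ii k := by
  have hmem : kplus ii m k ∈ ({l | k < l ∧ l ≤ m ∧ ii l = ii k} ∪ {m+1} : Set ℕ) :=
    Nat.sInf_mem ⟨m + 1, Or.inr rfl⟩
  rcases hmem with ⟨hlt, -, hii⟩ | hm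
  · exact ⟨hlt, hii⟩
  · rw [Set.mem_singleton_iff] at hm
    omega

lemma kminus_le (ii : ℕ → Fin n) (k : ℕ) : kminus ii k ≤ k := by
  refine csSup_le ⟨0, Or.inr rfl⟩ ?_
  rintro l (⟨-, hl, -⟩ | hl)
  · exact hl.le
  · rw [Set.mem_singleton_iff.mp hl]
    exact Nat.zero_le k

def ExIsInitial (ii : ℕ → Fin n) (m : ℕ) : Prop :=
  ∀ p q, 1 ≤ p → p ≤ q → kplus ii m q ≤ m → kplus ii m p ≤ m

lemma ExIsInitial.of_iff_le {N : ℕ} (hex : ∀ k, 1 ≤ k → k ≤ m → (kplus ii m k ≤ m ↔ k ≤ N)) :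
    ExIsInitial ii m := by
  intro p q hp hpq hq
  have hqm := (lt_kplus_and_ii_kplus hq).1
  exact (hex p hp (by omega)).mpr ((hex q (by omega) (by omega)).mp hq |>.trans' hpq)

lemma ExIsInitial.kplus_eq {p q : ℕ} (h : ExIsInitial ii m) (hp : 1 ≤ p) (hpq : p ≤ q)
    (hfrozen : kplus ii m p = m + 1) : kplus ii m q = m + 1 := by
  by_contra hq
  have := h p q hp hpq (by have := kplus_le_succ ii m q; omega)
  omega

lemma deltaEx_of_kplus_le {l : ℕ} (hl : 1 ≤ l) (h : kplus ii m l ≤ m) : deltaEx ii m l = 0 :=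
  if_pos ⟨hl, h⟩

lemma deltaEx_of_kplus_eq {l : ℕ} (h : kplus ii m l = m + 1) : deltaEx ii m l = 1 :=
  if_neg fun hl => by omega

lemma eps_apply (k : ℕ) (j : Fin m) : eps m k j = if (j:ℕ) + 1 = k then 1 else 0 := rfl

lemma sum_smul_eps (w : Fin m → ℤ) : ∑ l : Fin m, w l • eps m ((l:ℕ) + 1) = w := by
  funext j
  simp [eps_apply, Finset.sum_apply, Fin.val_inj]

lemma eps_eq_single (j : Fin m) : eps m ((j:ℕ) + 1) = Pi.single j 1 := by
  funext l
  simp [eps_apply, Pi.single_apply, Fin.val_inj]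

variable {A : Fin n → Fin n → ℤ}

lemma rhoPE_apply (K : ℕ) (j : Fin m) :
    rhoPE A ii m K j = (if (j:ℕ) + 1 = K then 1 else 0) +
      if (j:ℕ) + 1 < K ∧ kplus ii m ((j:ℕ) + 1) = m + 1 then A (ii ((j:ℕ) + 1)) (ii K) else 0 := by
  rw [rhoPE, sum_smul_eps (fun l : Fin m => if (l:ℕ) + 1 < K ∧ kplus ii m ((l:ℕ) + 1) = m + 1
    then A (ii ((l:ℕ) + 1)) (ii K) else 0)]
  rfl

lemma rhoME_apply (K : ℕ) (j : Fin m) :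
    rhoME A ii m K j = (if (j:ℕ) + 1 = K then 1 else 0) -
      if (j:ℕ) + 1 ≤ K ∧ kplus ii m ((j:ℕ) + 1) = m + 1 then A (ii ((j:ℕ) + 1)) (ii K) else 0 := by
  rw [rhoME, sum_smul_eps (fun l : Fin m => if (l:ℕ) + 1 ≤ K ∧ kplus ii m ((l:ℕ) + 1) = m + 1
    then A (ii ((l:ℕ) + 1)) (ii K) else 0)]
  rfl

noncomputable def exPart (ii : ℕ → Fin n) (m : ℕ) (v : Fin m → ℤ) : Fin m → ℤ :=
  fun p => if kplus ii m ((p:ℕ) + 1) ≤ m then v p else 0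

lemma bvecP_eq (k : ℕ) : bvecP A ii m k =
    exPart ii m (bvec A ii m k) + deltaEx ii m (kplus ii m k) • eps m (kplus ii m k) := rfl

lemma bvecM_eq (k : ℕ) : bvecM A ii m k =
    exPart ii m (bvec A ii m k) - deltaEx ii m (kplus ii m k) • eps m (kplus ii m k) := rfl

lemma rhoPMap_eq_linearCombination :
    rhoPMap A ii m = Fintype.linearCombination ℤ fun j : Fin m => rhoPE A ii m ((j:ℕ) + 1) := rfl

lemma rhoMMap_eq_linearCombination :
    rhoMMap A ii m = Fintype.linearCombination ℤ fun j : Fin m => rhoME A ii m ((j:ℕ) + 1) := rfl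

lemma rhoPMap_eps (j : Fin m) : rhoPMap A ii m (eps m ((j:ℕ) + 1)) = rhoPE A ii m ((j:ℕ) + 1) := by
  rw [rhoPMap_eq_linearCombination, eps_eq_single, Fintype.linearCombination_apply_single, one_smul]

lemma rhoMMap_eps (j : Fin m) : rhoMMap A ii m (eps m ((j:ℕ) + 1)) = rhoME A ii m ((j:ℕ) + 1) := by
  rw [rhoMMap_eq_linearCombination, eps_eq_single, Fintype.linearCombination_apply_single, one_smul]

lemma deltaEx_mul_ite_eq_zero {p : ℕ} (K : ℕ) (hp1 : 1 ≤ p) (hp : kplus ii m p ≤ m) :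
    deltaEx ii m K * (if p = K then 1 else 0) = 0 := by
  split_ifs with hpK
  · rw [← hpK, deltaEx_of_kplus_le hp1 hp, zero_mul]
  · rw [mul_zero]

namespace ExIsInitial

variable (h : ExIsInitial ii m)
include h

lemma rhoPE_eq_eps {K : ℕ} (hK : kplus ii m K ≤ m) : rhoPE A ii m K = eps m K := by
  funext j
  have hfrozen : ¬((j:ℕ) + 1 < K ∧ kplus ii m ((j:ℕ) + 1) = m + 1) := fun ⟨hjK, hj⟩ => by
    have := h _ K (by omega) hjK.le hK
    omega
  rw [rhoPE_apply, eps_apply, if_neg hfrozen, add_zero]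

lemma rhoME_eq_eps {K : ℕ} (hK : kplus ii m K ≤ m) : rhoME A ii m K = eps m K := by
  funext j
  have hfrozen : ¬((j:ℕ) + 1 ≤ K ∧ kplus ii m ((j:ℕ) + 1) = m + 1) := fun ⟨hjK, hj⟩ => by
    have := h _ K (by omega) hjK hK
    omega
  rw [rhoME_apply, eps_apply, if_neg hfrozen, sub_zero]

lemma rhoPMap_exPart (v : Fin m → ℤ) : rhoPMap A ii m (exPart ii m v) = exPart ii m v := by
  conv_rhs => rw [← sum_smul_eps (exPart ii m v)]
  refine Finset.sum_congr rfl fun l _ => ?_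
  by_cases hl : kplus ii m ((l:ℕ) + 1) ≤ m
  · rw [h.rhoPE_eq_eps hl]
  · simp only [exPart, if_neg hl, zero_smul]

lemma rhoMMap_exPart (v : Fin m → ℤ) : rhoMMap A ii m (exPart ii m v) = exPart ii m v := by
  conv_rhs => rw [← sum_smul_eps (exPart ii m v)]
  refine Finset.sum_congr rfl fun l _ => ?_
  by_cases hl : kplus ii m ((l:ℕ) + 1) ≤ m
  · rw [h.rhoME_eq_eps hl]
  · simp only [exPart, if_neg hl, zero_smul]

lemma bcoef_of_kplus_eq {p k : ℕ} (hp1 : 1 ≤ p) (hp : kplus ii m p = m + 1)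
    (hk : kplus ii m k ≤ m) :
    bcoef A ii m p k = deltaEx ii m (kplus ii m k) *
      ((if p < kplus ii m k then A (ii p) (ii k) else 0) + if p = kplus ii m k then 1 else 0) := by
  have hkp : k < p := by
    by_contra hpk
    have := h p k hp1 (by omega) hk
    omega
  have := kminus_le ii k
  by_cases hpK : p ≤ kplus ii m k
  · rw [deltaEx_of_kplus_eq (h.kplus_eq hp1 hpK hp), one_mul]
    unfold bcoef
    split_ifs <;> omega
  · unfold bcoef
    split_ifs <;> omega

lemma exPart_add_deltaEx_smul_rhoPE {k : ℕ} (hk : kplus ii m k ≤ m) :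
    exPart ii m (bvec A ii m k) + deltaEx ii m (kplus ii m k) • rhoPE A ii m (kplus ii m k) =
      bvec A ii m k := by
  obtain ⟨-, hii⟩ := lt_kplus_and_ii_kplus hk
  funext j
  simp only [Pi.add_apply, Pi.smul_apply, smul_eq_mul, rhoPE_apply, exPart, bvec]
  by_cases hj : kplus ii m ((j:ℕ) + 1) ≤ m
  · have hnf : ¬((j:ℕ) + 1 < kplus ii m k ∧ kplus ii m ((j:ℕ) + 1) = m + 1) := by omega
    rw [if_pos hj, if_neg hnf, add_zero, deltaEx_mul_ite_eq_zero _ (by omega) hj, add_zero]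
  · have hfj : kplus ii m ((j:ℕ) + 1) = m + 1 := by have := kplus_le_succ ii m ((j:ℕ) + 1); omega
    rw [if_neg hj, zero_add, h.bcoef_of_kplus_eq (by omega) hfj hk, add_comm]
    simp only [hfj, and_true, hii]

lemma exPart_sub_deltaEx_smul_rhoME (hA : ∀ i, A i i = 2) {k : ℕ} (hk : kplus ii m k ≤ m) :
    exPart ii m (bvec A ii m k) - deltaEx ii m (kplus ii m k) • rhoME A ii m (kplus ii m k) =
      bvec A ii m k := by
  obtain ⟨-, hii⟩ := lt_kplus_and_ii_kplus hk
  funext j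
  simp only [Pi.sub_apply, Pi.smul_apply, smul_eq_mul, rhoME_apply, exPart, bvec]
  by_cases hj : kplus ii m ((j:ℕ) + 1) ≤ m
  · have hnf : ¬((j:ℕ) + 1 ≤ kplus ii m k ∧ kplus ii m ((j:ℕ) + 1) = m + 1) := by omega
    rw [if_pos hj, if_neg hnf, sub_zero, deltaEx_mul_ite_eq_zero _ (by omega) hj, sub_zero]
  · have hfj : kplus ii m ((j:ℕ) + 1) = m + 1 := by have := kplus_le_succ ii m ((j:ℕ) + 1); omega
    have hAjk : (j:ℕ) + 1 = kplus ii m k → A (ii ((j:ℕ) + 1)) (ii k) = 2 := fun e => by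
      rw [e, hii, hA]
    rw [if_neg hj, zero_sub, h.bcoef_of_kplus_eq (by omega) hfj hk]
    simp only [hfj, and_true, hii]
    split_ifs <;> first | omega | ring1 | (rw [hAjk ‹_›]; ring1)

end ExIsInitial

theorem rho_bvec_truncated_general {n m : ℕ}
    (A : Fin n → Fin n → ℤ)
    (hA : ∀ i, A i i = 2)
    (ii : ℕ → Fin n)
    (r : ℕ)
    (hex : ∀ k, 1 ≤ k → k ≤ m → (kplus ii m k ≤ m ↔ k ≤ m - r))
    (k : ℕ) (hk2 : kplus ii m k ≤ m) :
    rhoPMap A ii m (bvecP A ii m k) = bvec A ii m k ∧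
    rhoMMap A ii m (bvecM A ii m k) = bvec A ii m k := by
  have hinit : ExIsInitial ii m := .of_iff_le hex
  have hk_lt := (lt_kplus_and_ii_kplus hk2).1
  obtain ⟨K, hK⟩ : ∃ K : Fin m, (K:ℕ) + 1 = kplus ii m k :=
    ⟨⟨kplus ii m k - 1, by omega⟩, by simp only; omega⟩
  constructor
  · rw [bvecP_eq, rhoPMap_eq_linearCombination, map_add, map_smul,
      ← rhoPMap_eq_linearCombination, hinit.rhoPMap_exPart, ← hK, rhoPMap_eps, hK]
    exact hinit.exPart_add_deltaEx_smul_rhoPE hk2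
  · rw [bvecM_eq, rhoMMap_eq_linearCombination, map_sub, map_smul,
      ← rhoMMap_eq_linearCombination, hinit.rhoMMap_exPart, ← hK, rhoMMap_eps, hK]
    exact hinit.exPart_sub_deltaEx_smul_rhoME hA hk2

/-- `ρ_𝐢⁺(𝐛^k₊) = 𝐛^k` and `ρ_𝐢⁻(𝐛^k₋) = 𝐛^k` for `k ∈ 𝐞𝐱`,
assuming `𝐞𝐱 = {1,…,m-r}` where `r = #{k ∈ [1,m] : k⁺ = m+1}`. -/
theorem rho_bvec_truncated {n m : ℕ} (hm : 1 ≤ m)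
    (A : Fin n → Fin n → ℤ) (d : Fin n → ℤ)
    (hA : ∀ i, A i i = 2) (hd : ∀ i, 0 < d i)
    (hsym : ∀ i j, d i * A i j = d j * A j i)
    (ii : ℕ → Fin n)
    (r : ℕ) (hr : r = Set.ncard {k : ℕ | 1 ≤ k ∧ k ≤ m ∧ kplus ii m k = m + 1})
    (hex : ∀ k, 1 ≤ k → k ≤ m → (kplus ii m k ≤ m ↔ k ≤ m - r))
    (k : ℕ) (hk1 : 1 ≤ k) (hk2 : kplus ii m k ≤ m) :
    rhoPMap A ii m (bvecP A ii m k) = bvec A ii m k ∧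
    rhoMMap A ii m (bvecM A ii m k) = bvec A ii m k :=
  rho_bvec_truncated_general A hA ii r hex k hk2
end
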